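/- arXiv:2103.02307 — 4 statements merged into one kernel-verified Lean document; each statement's English description precedes it below -/
import Mathlib

section
/- For every connected graph G with n vertices and m edges, the Wiener index satisfies W(G) ≥ ε(G) + m − n, where ε(G) is the sum of vertex eccentricities. -/
open Finset

/-- The Wiener index: sum of distances over unordered pairs of vertices. -/
noncomputable def wiener {V : Type*} [Fintype V] (G : SimpleGraph V) : ℕ :=
  (∑ u : V, ∑ v : V, G.dist u v) / 2

/-- The eccentricity of a vertex. -/
noncomputable def eccVert {V : Type*} [Fintype V] (G : SimpleGraph V) (v : V) : ℕ :=
  univ.sup (G.dist v)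

/-- The eccentricity (total eccentricity) of a graph. -/
noncomputable def eccSum {V : Type*} [Fintype V] (G : SimpleGraph V) : ℕ :=
  ∑ v : V, eccVert G v

/-!
Fix a vertex `v` and a shortest path from `v` to a vertex at distance `ε(v)`. Its vertices
at positions `2, …, ε(v)` lie at exactly those distances from `v` and are not neighbours of `v`,
so `∑ᵤ d(v,u) ≥ deg v + (2 + ⋯ + ε(v)) ≥ deg v + 2 ε(v) - 2`. Summing over `v` gives
`2 W(G) ≥ 2m + 2 ε(G) - 2n`.
-/

namespace SimpleGraph

variable {V : Type*} {G : SimpleGraph V}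

lemma Walk.dist_getVert_of_length_eq_dist {u v : V} (p : G.Walk u v)
    (hp : p.length = G.dist u v) {i : ℕ} (hi : i ≤ p.length) :
    G.dist u (p.getVert i) = i := by
  have hstart : G.dist u (p.getVert i) ≤ i :=
    (dist_le (p.take i)).trans (by simp [Walk.take_length])
  have hend : G.dist (p.getVert i) v ≤ p.length - i :=
    (dist_le (p.drop i)).trans_eq (p.drop_length i)
  have htri := (p.take i).reachable.dist_triangle_left v
  omega

lemma sum_dist_neighborFinset [Fintype V] [DecidableRel G.Adj] (v : V) :
    ∑ u ∈ G.neighborFinset v, G.dist v u = G.degree v := by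
  rw [← card_neighborFinset_eq_degree, card_eq_sum_ones]
  exact sum_congr rfl fun u hu => dist_eq_one_iff_adj.mpr ((mem_neighborFinset G v u).mp hu)

theorem Connected.degree_add_two_mul_eccVert_le [Fintype V] [DecidableEq V]
    [DecidableRel G.Adj] (hG : G.Connected) (v : V) :
    G.degree v + 2 * eccVert G v ≤ ∑ u, G.dist v u + 2 := by
  have := hG.nonempty
  set e := eccVert G v
  obtain ⟨u, -, hu⟩ := exists_mem_eq_sup univ univ_nonempty (G.dist v)
  obtain ⟨p, hp⟩ := hG.exists_walk_length_eq_dist v u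
  have hdist : ∀ i ∈ Icc 2 e, G.dist v (p.getVert i) = i := fun i hi =>
    p.dist_getVert_of_length_eq_dist hp (by rw [hp, ← hu]; exact (mem_Icc.mp hi).2)
  set A := (Icc 2 e).image p.getVert
  have hA : ∑ w ∈ A, G.dist v w = ∑ i ∈ Icc 2 e, i := by
    rw [sum_image fun i hi j hj hij => by rw [← hdist i hi, ← hdist j hj, hij]]
    exact sum_congr rfl hdist
  have hdisj : Disjoint (G.neighborFinset v) A := by
    refine disjoint_right.mpr fun w hw hadj => ?_
    obtain ⟨i, hi, rfl⟩ := mem_image.mp hw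
    have h1 := dist_eq_one_iff_adj.mpr ((mem_neighborFinset G v _).mp hadj)
    have h2 := (mem_Icc.mp hi).1
    rw [hdist i hi] at h1
    omega
  have htail : 2 * (e - 1) ≤ ∑ i ∈ Icc 2 e, i := by
    simpa [Nat.card_Icc, mul_comm] using
      card_nsmul_le_sum (Icc 2 e) id 2 fun i hi => (mem_Icc.mp hi).1
  have hsum : G.degree v + 2 * (e - 1) ≤ ∑ w, G.dist v w :=
    calc G.degree v + 2 * (e - 1) ≤ ∑ w ∈ G.neighborFinset v ∪ A, G.dist v w := by
          rw [sum_union hdisj, sum_dist_neighborFinset, hA]; omega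
      _ ≤ ∑ w, G.dist v w := sum_le_sum_of_subset (subset_univ _)
  omega

end SimpleGraph

theorem stmt_0 {V : Type*} [Fintype V] [DecidableEq V] (G : SimpleGraph V)
    [DecidableRel G.Adj] (hG : G.Connected) :
    (wiener G : ℤ) ≥ eccSum G + G.edgeFinset.card - Fintype.card V := by
  have hsum :
      2 * #G.edgeFinset + 2 * eccSum G ≤ ∑ u, ∑ v, G.dist u v + 2 * Fintype.card V := by
    rw [← G.sum_degrees_eq_twice_card_edges, eccSum, mul_sum, ← sum_add_distrib,
      ← card_univ, card_eq_sum_ones, mul_sum, ← sum_add_distrib]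
    exact sum_le_sum fun v _ => by simpa using hG.degree_add_two_mul_eccVert_le v
  have hdiv := Nat.div_add_mod (∑ u, ∑ v, G.dist u v) 2
  have hmod := Nat.mod_lt (∑ u, ∑ v, G.dist u v) two_pos
  unfold wiener
  omega
end

section
/- For every connected graph G on n vertices, W(G) ≤ ((n−1)/2)·ε(G), with equality if and only if G is the complete graph K_n. -/
open Finset

/-!
Each of the `n - 1` distances from a vertex `u` to the other vertices is at most the eccentricity
of `u`; summing over `u` gives `2 W(G) ≤ (n - 1) ε(G)`. Equality forces `d(u, v) = ecc(u)` for all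
`v ≠ u`. Taking `v` to be a neighbour of `u` gives `ecc(u) = 1`, so every vertex is adjacent to
all others, i.e. `G = K_n`; conversely in `K_n` all these distances and eccentricities equal `1`.
-/

theorem Finset.two_dvd_sum_sum_of_symm {ι : Type*} [Fintype ι] (f : ι → ι → ℕ)
    (hsymm : ∀ i j, f i j = f j i) (hdiag : ∀ i, f i i = 0) : 2 ∣ ∑ i, ∑ j, f i j := by
  -- in `ZMod 2`, the swap `(i, j) ↦ (j, i)` pairs off equal terms, and its fixed points contribute 0
  rw [← ZMod.natCast_eq_zero_iff, ← Finset.sum_product', Nat.cast_sum]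
  refine Finset.sum_ninvolution Prod.swap (fun p => ?_) (fun p hp hfix => hp ?_)
    (fun _ => mem_univ _) Prod.swap_swap
  · rw [Prod.fst_swap, Prod.snd_swap, hsymm p.2 p.1, ← Nat.cast_add, ← two_mul, Nat.cast_mul]
    exact mul_eq_zero_of_left (ZMod.natCast_self 2) _
  · have hp1 : p.1 = p.2 := congrArg Prod.snd hfix
    rw [hp1, hdiag, Nat.cast_zero]

namespace SimpleGraph

variable {V : Type*} [Fintype V] (G : SimpleGraph V)

theorem cast_wiener : (wiener G : ℚ) = (∑ u, ∑ v, G.dist u v : ℕ) / 2 :=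
  Nat.cast_div (two_dvd_sum_sum_of_symm _ (fun _ _ => G.dist_comm) (fun _ => G.dist_self)) two_ne_zero

theorem dist_le_eccVert (u v : V) : G.dist u v ≤ eccVert G u :=
  le_sup (mem_univ v)

theorem sum_dist_eq_sum_erase [DecidableEq V] (u : V) :
    ∑ v, G.dist u v = ∑ v ∈ univ.erase u, G.dist u v :=
  (sum_erase univ G.dist_self).symm

theorem sum_const_eccVert_erase [DecidableEq V] (u : V) :
    ∑ _v ∈ univ.erase u, eccVert G u = (Fintype.card V - 1) * eccVert G u := by
  rw [sum_const, card_erase_of_mem (mem_univ u), card_univ, smul_eq_mul]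

theorem sum_dist_le (u : V) : ∑ v, G.dist u v ≤ (Fintype.card V - 1) * eccVert G u := by
  classical
  rw [sum_dist_eq_sum_erase, ← sum_const_eccVert_erase]
  exact sum_le_sum fun v _ => G.dist_le_eccVert u v

theorem sum_dist_eq_iff (u : V) :
    ∑ v, G.dist u v = (Fintype.card V - 1) * eccVert G u ↔
      ∀ v, v ≠ u → G.dist u v = eccVert G u := by
  classical
  rw [sum_dist_eq_sum_erase, ← sum_const_eccVert_erase,
    sum_eq_sum_iff_of_le fun v _ => G.dist_le_eccVert u v]
  simp only [mem_erase, mem_univ, and_true]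

theorem sum_sum_dist_le : ∑ u, ∑ v, G.dist u v ≤ (Fintype.card V - 1) * eccSum G := by
  rw [eccSum, mul_sum]
  exact sum_le_sum fun u _ => G.sum_dist_le u

theorem sum_sum_dist_eq_iff :
    ∑ u, ∑ v, G.dist u v = (Fintype.card V - 1) * eccSum G ↔
      ∀ u v, v ≠ u → G.dist u v = eccVert G u := by
  rw [eccSum, mul_sum, sum_eq_sum_iff_of_le fun u _ => G.sum_dist_le u]
  simp only [mem_univ, true_implies, sum_dist_eq_iff]

theorem eccVert_top_of_ne {u v : V} (h : v ≠ u) : eccVert ⊤ u = 1 := by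
  classical
  refine le_antisymm (Finset.sup_le fun w _ => ?_) ?_
  · rw [dist_top]
    split_ifs <;> simp
  · rw [← dist_top_of_ne h.symm]
    exact (⊤ : SimpleGraph V).dist_le_eccVert u v

theorem eq_top_iff_forall_dist_eq_eccVert (hG : G.Preconnected) :
    G = ⊤ ↔ ∀ u v, v ≠ u → G.dist u v = eccVert G u := by
  constructor
  · rintro rfl u v h
    rw [dist_top_of_ne h.symm, eccVert_top_of_ne h]
  · intro hecc
    ext u v
    refine ⟨G.ne_of_adj, fun huv => ?_⟩
    have : Nontrivial V := ⟨⟨u, v, huv⟩⟩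
    obtain ⟨w, huw⟩ := hG.exists_adj_of_nontrivial u
    have hecc_one : eccVert G u = 1 := by
      rw [← hecc u w huw.ne.symm, dist_eq_one_iff_adj.2 huw]
    exact dist_eq_one_iff_adj.1 ((hecc u v (Ne.symm huv)).trans hecc_one)

end SimpleGraph

open SimpleGraph in
theorem stmt_4 {V : Type*} [Fintype V] (G : SimpleGraph V) (hG : G.Connected) :
    (wiener G : ℚ) ≤ (Fintype.card V - 1) / 2 * eccSum G ∧
      ((wiener G : ℚ) = (Fintype.card V - 1) / 2 * eccSum G ↔ G = ⊤) := by
  have : Nonempty V := hG.nonempty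
  have hcard : ((Fintype.card V : ℚ) - 1) = ((Fintype.card V - 1 : ℕ) : ℚ) :=
    (Nat.cast_pred Fintype.card_pos).symm
  rw [cast_wiener, hcard, div_mul_eq_mul_div, eq_top_iff_forall_dist_eq_eccVert G hG.preconnected,
    ← sum_sum_dist_eq_iff, div_le_div_iff_of_pos_right two_pos,
    div_left_inj' two_ne_zero]
  exact ⟨mod_cast G.sum_sum_dist_le, by norm_cast⟩
end

section
/- If T is a tree on n vertices, then W(T) = W(L(T)) + C(n,2), where L(T) is the line graph of T. -/
/-!
For distinct vertices `x`, `y` of a tree, let `e` and `f` be the first edges of the paths from `x`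
to `y` and from `y` to `x`. The path between them gives a walk of length `d(x, y) - 1` from `e` to
`f` in the line graph, and conversely a walk of length `k` from `e` to `f` gives
`d(x, y) ≤ k + 1`; hence `d_T(x, y) = d_{L(T)}(e, f) + 1`. For edges `e ≠ f`, the endpoints
`x ∈ e`, `y ∈ f` at maximal distance are such a pair, and they are distinct and non-adjacent. So
`(x, y) ↦ (e, f)` maps the ordered pairs of distinct non-adjacent vertices onto the ordered pairs
of distinct edges; both sets have `(n - 1)(n - 2)` elements, so it is a bijection. Summing
`d_T - 1` over all ordered pairs of distinct vertices therefore gives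
`2 W(T) - n (n - 1) = 2 W(L(T))`.
-/

open Finset

theorem Finset.sum_sum_eq_sum_offDiag {α M : Type*} [Fintype α] [AddCommMonoid M]
    {D : α → α → M} (hD : ∀ a, D a a = 0) :
    ∑ a, ∑ b, D a b = ∑ p ∈ univ.offDiag, D p.1 p.2 := by
  rw [← sum_product', univ_product_univ]
  refine (sum_subset (subset_univ _) fun p _ hp => ?_).symm
  simp only [mem_offDiag, mem_univ, true_and, not_not] at hp
  rw [hp, hD]

namespace SimpleGraph

variable {V : Type*} {G : SimpleGraph V}

theorem adj_of_coe_eq_mk {e : G.edgeSet} {x x' : V} (h : (e : Sym2 V) = s(x, x')) :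
    G.Adj x x' := by
  rw [← mem_edgeSet, ← h]
  exact e.2

theorem edist_le_one_of_mem_edge {e : G.edgeSet} {x y : V} (hx : x ∈ (e : Sym2 V))
    (hy : y ∈ (e : Sym2 V)) : G.edist x y ≤ 1 := by
  rw [edist_le_one_iff_adj_or_eq]
  by_cases hxy : x = y
  · exact .inr hxy
  · exact .inl (adj_of_coe_eq_mk ((Sym2.mem_and_mem_iff hxy).1 ⟨hx, hy⟩))

theorem dist_le_length_lineGraph_walk_add_one {e f : G.edgeSet} (w : G.lineGraph.Walk e f)
    {x y : V} (hx : x ∈ (e : Sym2 V)) (hy : y ∈ (f : Sym2 V)) :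
    G.dist x y ≤ w.length + 1 := by
  suffices G.edist x y ≤ w.length + 1 from ENat.toNat_le_of_le_natCast (mod_cast this)
  induction w generalizing x with
  | nil => simpa using edist_le_one_of_mem_edge hx hy
  | cons hadj w ih =>
    obtain ⟨-, z, hz, hz'⟩ := lineGraph_adj_iff_exists.1 hadj
    calc G.edist x y ≤ G.edist x z + G.edist z y := G.edist_triangle
      _ ≤ 1 + (w.length + 1) := add_le_add (edist_le_one_of_mem_edge hx hz) (ih hz' hy)
      _ = (w.cons hadj).length + 1 := by push_cast [Walk.length_cons]; ring

theorem Walk.IsPath.exists_lineGraph_walk {u v : V} {p : G.Walk u v} (hp : p.IsPath)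
    (hnil : ¬p.Nil) {e f : G.edgeSet} (he : (e : Sym2 V) = s(u, p.snd))
    (hf : (f : Sym2 V) = s(p.penultimate, v)) :
    ∃ w : G.lineGraph.Walk e f, w.length + 1 = p.length := by
  induction p generalizing e with
  | nil => simp at hnil
  | @cons u x v h q ih =>
    by_cases hq : q.Nil
    · cases hq
      obtain rfl : e = f := Subtype.ext (he.trans hf.symm)
      exact ⟨.nil, rfl⟩
    rw [Walk.penultimate_cons_of_not_nil h q hq] at hf
    obtain ⟨w, hw⟩ := ih hp.of_cons hq (e := ⟨s(x, q.snd), q.adj_snd hq⟩) rfl hf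
    have hu : u ∉ q.support := ((Walk.cons_isPath_iff h q).1 hp).2
    have hadj : G.lineGraph.Adj e ⟨s(x, q.snd), q.adj_snd hq⟩ := by
      refine lineGraph_adj_iff_exists.2 ⟨fun heq => ?_, x, by simp [he], Sym2.mem_mk_left _ _⟩
      have := congrArg Subtype.val heq
      simp only [he, Walk.snd_cons, Sym2.eq_iff] at this
      rcases this with ⟨rfl, -⟩ | ⟨rfl, -⟩
      · exact h.ne rfl
      · exact hu (q.getVert_mem_support 1)
    exact ⟨.cons hadj w, by simp [hw]⟩

/-- `e` is the first edge of a shortest walk from `x` to `y`. -/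
def IsFirstEdge (G : SimpleGraph V) (e : G.edgeSet) (x y : V) : Prop :=
  ∃ x', (e : Sym2 V) = s(x, x') ∧ G.dist x' y + 1 = G.dist x y

namespace IsFirstEdge

variable {e f : G.edgeSet} {x y : V}

theorem ne (he : G.IsFirstEdge e x y) : x ≠ y := by
  rintro rfl
  obtain ⟨_, -, h⟩ := he
  simp at h

theorem reachable (he : G.IsFirstEdge e x y) : G.Reachable x y :=
  Reachable.of_dist_ne_zero (by obtain ⟨_, -, h⟩ := he; omega)

theorem not_adj (he : G.IsFirstEdge e x y) (hf : G.IsFirstEdge f y x) (hef : e ≠ f) :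
    ¬G.Adj x y := by
  intro hxy
  obtain ⟨x', hex, hx'⟩ := he
  obtain ⟨y', hfy, hy'⟩ := hf
  rw [dist_eq_one_iff_adj.2 hxy] at hx'
  rw [dist_eq_one_iff_adj.2 hxy.symm] at hy'
  obtain rfl : x' = y :=
    ((adj_of_coe_eq_mk hex).symm.reachable.trans hxy.reachable).dist_eq_zero_iff.1 (by omega)
  obtain rfl : y' = x :=
    ((adj_of_coe_eq_mk hfy).symm.reachable.trans hxy.symm.reachable).dist_eq_zero_iff.1 (by omega)
  exact hef (Subtype.ext (hex.trans (hfy.trans Sym2.eq_swap).symm))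

end IsFirstEdge

namespace IsAcyclic

variable {e f : G.edgeSet} {x y : V}

theorem coe_eq_mk_snd_of_isFirstEdge (hG : G.IsAcyclic) {p : G.Walk x y} (hp : p.IsPath)
    (he : G.IsFirstEdge e x y) : (e : Sym2 V) = s(x, p.snd) := by
  obtain ⟨x', hex, hx'⟩ := he
  have hxx' := adj_of_coe_eq_mk hex
  obtain ⟨q, hq⟩ := (hxx'.reachable.symm.trans p.reachable).exists_walk_length_eq_dist
  have hpath : (Walk.cons hxx' q).IsPath := Walk.isPath_of_length_eq_dist _ (by simp [hq, hx'])
  obtain rfl : p = .cons hxx' q :=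
    congrArg Subtype.val ((hG.subsingleton_path x y).elim ⟨p, hp⟩ ⟨_, hpath⟩)
  simpa using hex

theorem isFirstEdge_unique (hG : G.IsAcyclic) {e' : G.edgeSet} (he : G.IsFirstEdge e x y)
    (he' : G.IsFirstEdge e' x y) : e = e' := by
  obtain ⟨p, hp, -⟩ := he.reachable.exists_path_of_dist
  exact Subtype.ext ((hG.coe_eq_mk_snd_of_isFirstEdge hp he).trans
    (hG.coe_eq_mk_snd_of_isFirstEdge hp he').symm)

theorem lineGraph_dist_add_one (hG : G.IsAcyclic) (he : G.IsFirstEdge e x y)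
    (hf : G.IsFirstEdge f y x) : G.lineGraph.dist e f + 1 = G.dist x y := by
  obtain ⟨p, hp, hlen⟩ := he.reachable.exists_path_of_dist
  have hex := hG.coe_eq_mk_snd_of_isFirstEdge hp he
  have hfy := hG.coe_eq_mk_snd_of_isFirstEdge hp.reverse hf
  rw [Walk.snd_reverse] at hfy
  obtain ⟨w, hw⟩ := hp.exists_lineGraph_walk (Walk.not_nil_of_ne he.ne) hex
    (hfy.trans Sym2.eq_swap)
  obtain ⟨w₀, hw₀⟩ := w.reachable.exists_walk_length_eq_dist
  have := dist_le_length_lineGraph_walk_add_one w₀ (hex ▸ Sym2.mem_mk_left _ _)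
    (hfy ▸ Sym2.mem_mk_left _ _)
  have := dist_le w
  omega

end IsAcyclic

theorem IsTree.exists_isFirstEdge (hG : G.IsTree) (e f : G.edgeSet) :
    ∃ x y, G.IsFirstEdge e x y ∧ G.IsFirstEdge f y x := by
  classical
  have hne (z : Sym2 V) : z.toFinset.Nonempty := nonempty_iff_ne_empty.2 z.toFinset_ne_empty
  obtain ⟨⟨x, y⟩, hxy, hmax⟩ := ((e : Sym2 V).toFinset ×ˢ (f : Sym2 V).toFinset).exists_max_image
    (fun p => G.dist p.1 p.2) ((hne _).product (hne _))
  simp only [mem_product, Sym2.mem_toFinset] at hxy hmax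
  obtain ⟨hx, hy⟩ := hxy
  obtain ⟨x', hex⟩ : ∃ x', (e : Sym2 V) = s(x, x') := ⟨_, (Sym2.other_spec hx).symm⟩
  obtain ⟨y', hfy⟩ : ∃ y', (f : Sym2 V) = s(y, y') := ⟨_, (Sym2.other_spec hy).symm⟩
  have hx'y := hmax (x', y) ⟨by simp [hex], hy⟩
  have hxy' := hmax (x, y') ⟨hx, by simp [hfy]⟩
  have := hG.dist_eq_dist_add_one_of_adj x (adj_of_coe_eq_mk hfy)
  have := hG.dist_eq_dist_add_one_of_adj y (adj_of_coe_eq_mk hex)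
  rw [dist_comm (u := y) (v := x), dist_comm (u := y) (v := x')] at this
  dsimp only at hx'y hxy'
  exact ⟨x, y, ⟨x', hex, by omega⟩,
    ⟨y', hfy, by rw [dist_comm (u := y'), dist_comm (u := y)]; omega⟩⟩

section Finite

variable [Fintype V] [DecidableRel G.Adj]

theorem card_offDiag_filter_adj :
    #(univ.offDiag.filter fun p : V × V => G.Adj p.1 p.2) = 2 * #G.edgeFinset := by
  rw [← dart_card_eq_twice_card_edges, ← card_univ]
  refine card_bij (fun p hp => ⟨p, (mem_filter.1 hp).2⟩) (by simp)
    (fun _ _ _ _ h => congrArg Dart.toProd h) (fun d _ => ⟨d.toProd, ?_, rfl⟩)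
  simp [d.adj, d.adj.ne]

theorem IsTree.card_offDiag_filter_not_adj (hG : G.IsTree) :
    #(univ.offDiag.filter fun p : V × V => ¬G.Adj p.1 p.2) =
      #(univ : Finset G.edgeSet).offDiag := by
  have hsplit := card_filter_add_card_filter_not (s := univ.offDiag)
    (fun p : V × V => G.Adj p.1 p.2)
  rw [card_offDiag_filter_adj, offDiag_card, card_univ, ← hG.card_edgeFinset] at hsplit
  rw [offDiag_card, card_univ, ← edgeFinset_card]
  ring_nf at hsplit ⊢
  omega

theorem IsTree.sum_offDiag_lineGraph_dist (hG : G.IsTree) :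
    ∑ q ∈ (univ : Finset G.edgeSet).offDiag, G.lineGraph.dist q.1 q.2 =
      ∑ p ∈ univ.offDiag.filter (fun p : V × V => ¬G.Adj p.1 p.2), (G.dist p.1 p.2 - 1) := by
  choose x y hx hy using hG.exists_isFirstEdge
  have hmaps : ∀ q ∈ (univ : Finset G.edgeSet).offDiag,
      (x q.1 q.2, y q.1 q.2) ∈ univ.offDiag.filter (fun p : V × V => ¬G.Adj p.1 p.2) := by
    intro q hq
    simp only [mem_filter, mem_offDiag, mem_univ, true_and] at hq ⊢
    exact ⟨(hx _ _).ne, (hx _ _).not_adj (hy _ _) hq⟩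
  have hinj : Set.InjOn (fun q : G.edgeSet × G.edgeSet => (x q.1 q.2, y q.1 q.2))
      (univ : Finset G.edgeSet).offDiag := by
    rintro ⟨e, f⟩ - ⟨e', f'⟩ - h
    obtain ⟨h1, h2⟩ := Prod.mk.inj h
    have he' := hx e' f'
    have hf' := hy e' f'
    rw [← h1, ← h2] at he' hf'
    rw [hG.isAcyclic.isFirstEdge_unique (hx e f) he', hG.isAcyclic.isFirstEdge_unique (hy e f) hf']
  refine sum_nbij (fun q => (x q.1 q.2, y q.1 q.2)) hmaps hinj
    (surjOn_of_injOn_of_card_le _ hmaps hinj hG.card_offDiag_filter_not_adj.le) fun q _ => ?_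
  have := hG.isAcyclic.lineGraph_dist_add_one (hx q.1 q.2) (hy q.1 q.2)
  dsimp only
  omega

theorem IsTree.sum_dist_eq_sum_lineGraph_dist_add (hG : G.IsTree) :
    ∑ u, ∑ v, G.dist u v =
      ∑ e, ∑ f, G.lineGraph.dist e f + Fintype.card V * (Fintype.card V - 1) := by
  calc ∑ u, ∑ v, G.dist u v = ∑ p ∈ univ.offDiag, G.dist p.1 p.2 :=
        sum_sum_eq_sum_offDiag fun _ => dist_self
    _ = ∑ p ∈ univ.offDiag, ((G.dist p.1 p.2 - 1) + 1) := sum_congr rfl fun p hp =>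
        (Nat.sub_add_cancel (hG.connected.pos_dist_of_ne (mem_offDiag.1 hp).2.2)).symm
    _ = ∑ p ∈ univ.offDiag.filter (fun p : V × V => ¬G.Adj p.1 p.2), (G.dist p.1 p.2 - 1) +
          Fintype.card V * (Fintype.card V - 1) := by
      rw [sum_add_distrib, sum_filter_of_ne, sum_const, smul_eq_mul, mul_one, offDiag_card,
        card_univ, Nat.mul_sub_one]
      intro p _ hp hadj
      simp [dist_eq_one_iff_adj.2 hadj] at hp
    _ = ∑ e, ∑ f, G.lineGraph.dist e f + Fintype.card V * (Fintype.card V - 1) := by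
      rw [← hG.sum_offDiag_lineGraph_dist, sum_sum_eq_sum_offDiag fun _ => dist_self]

end Finite

end SimpleGraph

theorem stmt_13_general {V : Type*} [Fintype V] (T : SimpleGraph V)
    [DecidableRel T.Adj] (hT : T.IsTree) :
    wiener T = wiener T.lineGraph + (Fintype.card V).choose 2 := by
  have hpairs : Fintype.card V * (Fintype.card V - 1) = (Fintype.card V).choose 2 * 2 := by
    rw [Nat.choose_two_right, Nat.div_two_mul_two_of_even (Nat.even_mul_pred_self _)]
  rw [wiener, wiener, hT.sum_dist_eq_sum_lineGraph_dist_add, hpairs,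
    Nat.add_mul_div_right _ _ two_pos]

theorem stmt_13 {V : Type*} [Fintype V] [DecidableEq V] (T : SimpleGraph V)
    [DecidableRel T.Adj] (hT : T.IsTree) (hn : 2 ≤ Fintype.card V) :
    wiener T = wiener T.lineGraph + (Fintype.card V).choose 2 :=
  stmt_13_general T hT
end

section
/- If T is a tree on n vertices with radius r, then ε(T) ≥ r(n+r+1) if the center of T consists of a single vertex, and ε(T) ≥ (2r(n+r) − n)/2 if the center consists of two adjacent vertices; in either case equality holds if and only if T is a path. -/
open Finset

/-- The radius of a graph: the minimum eccentricity. -/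
noncomputable def graphRad {V : Type*} [Fintype V] [Nonempty V]
    (G : SimpleGraph V) : ℕ :=
  univ.inf' univ_nonempty (eccVert G)

/-!
Fix a longest path `x₀ … x_d` of `T`. Every vertex `v` has a nearest vertex `x_k` on it, and as
`T` is a tree, `d(v, x₀) = h + k` and `d(v, x_d) = h + (d - k)` with `h = d(v, x_k)`. Maximality of
the path then gives `ε(v) = h + max k (d - k)`. Hence `r = ⌈d/2⌉`, the center is
`{x_⌊d/2⌋, x_⌈d/2⌉}`, the path contributes `∑_{k ≤ d} max k (d - k)` to `ε(T)`, and each of the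
`n - d - 1` remaining vertices contributes at least `r + 1`. Compared with the claimed bounds this
leaves a surplus of `n - d - 1` (resp. `3(n - d - 1)/2`), which vanishes exactly when `T` is the path.
-/

lemma sum_range_max_sub_add_two (d : ℕ) :
    ∑ k ∈ range (d + 3), max k (d + 2 - k) =
      ∑ k ∈ range (d + 1), max k (d - k) + (3 * d + 5) := by
  rw [sum_range_succ', sum_range_succ]
  have hshift : ∀ k ∈ range (d + 1), max (k + 1) (d + 2 - (k + 1)) = max k (d - k) + 1 :=
    fun k hk => by have := mem_range.1 hk; omega
  rw [sum_congr rfl hshift, sum_add_distrib, sum_const, card_range, smul_eq_mul]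
  omega

lemma four_mul_sum_range_max_sub (d : ℕ) :
    4 * ∑ k ∈ range (d + 1), max k (d - k) = 3 * d ^ 2 + 4 * d + d % 2 := by
  induction d using Nat.twoStepInduction with
  | zero => simp
  | one => simp [sum_range_succ]
  | more d ih _ =>
    rw [sum_range_max_sub_add_two, mul_add, ih]
    ring_nf
    omega

namespace SimpleGraph

variable {V : Type*} {G : SimpleGraph V}

lemma pathGraph_val_le_add_length {n : ℕ} {i j : Fin n} (w : (pathGraph n).Walk i j) :
    (j : ℕ) ≤ i + w.length := by
  induction w with
  | nil => simp
  | cons h _ ih =>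
    rw [pathGraph_adj] at h
    rw [Walk.length_cons]
    omega

namespace Walk

lemma IsPath.getVert_injOn_range {u v : V} {p : G.Walk u v} (hp : p.IsPath) :
    Set.InjOn p.getVert (range (p.length + 1)) :=
  hp.getVert_injOn.mono fun _ hk => Nat.lt_succ_iff.1 (mem_range.1 hk)

lemma IsPath.card_image_getVert [DecidableEq V] {u v : V} {p : G.Walk u v} (hp : p.IsPath) :
    #((range (p.length + 1)).image p.getVert) = p.length + 1 := by
  rw [card_image_of_injOn hp.getVert_injOn_range, card_range]

lemma dist_getVert_getVert_of_length_eq_dist {u v : V} {p : G.Walk u v}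
    (hp : p.length = G.dist u v) {i j : ℕ} (hij : i ≤ j) (hj : j ≤ p.length) :
    G.dist (p.getVert i) (p.getVert j) = j - i := by
  have hstart : G.dist u (p.getVert i) ≤ i :=
    (dist_le _).trans_eq (by rw [take_length, min_eq_left (hij.trans hj)])
  have hmid : G.dist (p.getVert i) (p.getVert j) ≤ j - i := by
    have h := dist_le ((p.drop i).take (j - i))
    rw [take_length, drop_length, min_eq_left (by omega)] at h
    rwa [drop_getVert, Nat.add_sub_cancel' hij] at h
  have hend : G.dist (p.getVert j) v ≤ p.length - j := by
    simpa [drop_length] using dist_le (p.drop j)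
  have h₁ := (p.take i).reachable.dist_triangle_left v
  have h₂ := (p.drop j).reachable.dist_triangle_right (p.getVert i)
  omega

lemma dist_add_dist_of_mem_support {u v w : V} {p : G.Walk u v}
    (hp : p.length = G.dist u v) (hw : w ∈ p.support) :
    G.dist u w + G.dist w v = G.dist u v := by
  obtain ⟨n, rfl, hn⟩ := mem_support_iff_exists_getVert.1 hw
  have h₁ := dist_getVert_getVert_of_length_eq_dist hp (Nat.zero_le n) hn
  have h₂ := dist_getVert_getVert_of_length_eq_dist hp hn le_rfl
  rw [getVert_zero] at h₁
  rw [getVert_length] at h₂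
  omega

end Walk

lemma IsAcyclic.length_eq_dist_of_isPath (hG : G.IsAcyclic) {u v : V} {p : G.Walk u v}
    (hp : p.IsPath) : p.length = G.dist u v := by
  obtain ⟨q, hq, hlen⟩ := p.reachable.exists_path_of_dist
  rw [← hlen, show p = q from congrArg Subtype.val ((hG.subsingleton_path u v).elim ⟨p, hp⟩ ⟨q, hq⟩)]

lemma IsAcyclic.dist_eq_add_length_of_isPath (hG : G.IsAcyclic) {x y v : V} {q : G.Walk x y}
    (hq : q.IsPath) (hv : G.Reachable v x) (hmin : ∀ u ∈ q.support, G.dist v x ≤ G.dist v u) :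
    G.dist v y = G.dist v x + q.length := by
  obtain ⟨g, -, hg⟩ := hv.exists_path_of_dist
  -- a geodesic `g` from `v` to `x` meets `q` only in `x`, so `g.append q` is the path to `y`
  have hgq : (g.append q).IsPath := by
    rw [Walk.isPath_def, Walk.support_append, List.nodup_append]
    have hq' := hq.support_nodup
    rw [← Walk.cons_tail_support, List.nodup_cons] at hq'
    refine ⟨(g.isPath_of_length_eq_dist hg).support_nodup, hq'.2, ?_⟩
    rintro u hug _ huq rfl
    have hux : u = x := by
      have hsplit := Walk.dist_add_dist_of_mem_support hg hug
      have hreach : G.Reachable u x := by classical exact (g.dropUntil u hug).reachable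
      have := hmin u (List.mem_of_mem_tail huq)
      exact hreach.dist_eq_zero_iff.1 (by omega)
    exact hq'.1 (hux ▸ huq)
  rw [← hG.length_eq_dist_of_isPath hgq, Walk.length_append, hg]

namespace IsTree

variable (hG : G.IsTree) {a b : V} {P : G.Walk a b} (hP : P.IsPath)
include hG hP

lemma exists_getVert_dist_eq (v : V) :
    ∃ k ≤ P.length, G.dist v a = G.dist v (P.getVert k) + k ∧
      G.dist v b = G.dist v (P.getVert k) + (P.length - k) := by
  obtain ⟨k, hk, hmin⟩ := (range (P.length + 1)).exists_min_image
    (fun k => G.dist v (P.getVert k)) nonempty_range_add_one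
  have hk : k ≤ P.length := Nat.lt_succ_iff.1 (mem_range.1 hk)
  have hclosest : ∀ u ∈ P.support, G.dist v (P.getVert k) ≤ G.dist v u := by
    intro u hu
    obtain ⟨n, rfl, hn⟩ := Walk.mem_support_iff_exists_getVert.1 hu
    exact hmin n (mem_range.2 (Nat.lt_succ_of_le hn))
  refine ⟨k, hk, ?_, ?_⟩
  · have h := hG.isAcyclic.dist_eq_add_length_of_isPath (hP.take k).reverse
      (hG.connected _ _) fun u hu => hclosest u ?_
    · rwa [Walk.length_reverse, Walk.take_length, min_eq_left hk] at h
    rw [Walk.support_reverse, List.mem_reverse, Walk.support_take] at hu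
    exact List.mem_of_mem_take hu
  · have h := hG.isAcyclic.dist_eq_add_length_of_isPath (hP.drop k)
      (hG.connected _ _) fun u hu => hclosest u ?_
    · rwa [Walk.drop_length] at h
    rw [Walk.drop_support_eq_support_drop_min] at hu
    exact List.mem_of_mem_drop hu

lemma dist_getVert_getVert {i j : ℕ} (hij : i ≤ j) (hj : j ≤ P.length) :
    G.dist (P.getVert i) (P.getVert j) = j - i :=
  Walk.dist_getVert_getVert_of_length_eq_dist (hG.isAcyclic.length_eq_dist_of_isPath hP) hij hj

lemma dist_start_getVert {k : ℕ} (hk : k ≤ P.length) : G.dist a (P.getVert k) = k := by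
  simpa using hG.dist_getVert_getVert hP (Nat.zero_le k) hk

lemma dist_getVert_end {k : ℕ} (hk : k ≤ P.length) :
    G.dist (P.getVert k) b = P.length - k := by
  simpa using hG.dist_getVert_getVert hP hk le_rfl

end IsTree

variable [Fintype V] {T : SimpleGraph V}

lemma dist_le_eccVert_s18 (v w : V) : T.dist v w ≤ eccVert T v := le_sup (mem_univ w)

lemma Connected.exists_isPath_forall_dist_le [Nonempty V] (hT : T.Connected) :
    ∃ (a b : V) (P : T.Walk a b), P.IsPath ∧ ∀ u w, T.dist u w ≤ P.length := by
  obtain ⟨⟨a, b⟩, hab⟩ := Finite.exists_max fun x : V × V => T.dist x.1 x.2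
  obtain ⟨P, hP, hlen⟩ := hT.exists_path_of_dist a b
  exact ⟨a, b, P, hP, fun u w => hlen ▸ hab (u, w)⟩

namespace IsTree

variable (hT : T.IsTree) {a b : V} {P : T.Walk a b} (hP : P.IsPath)
  (hdiam : ∀ u w, T.dist u w ≤ P.length)
include hT hP hdiam

lemma eccVert_eq_max_dist (v : V) : eccVert T v = max (T.dist v a) (T.dist v b) := by
  refine le_antisymm (Finset.sup_le fun w _ => ?_)
    (max_le (dist_le_eccVert_s18 v a) (dist_le_eccVert_s18 v b))
  obtain ⟨k, hk, hva, hvb⟩ := hT.exists_getVert_dist_eq hP v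
  obtain ⟨l, hl, hwa, hwb⟩ := hT.exists_getVert_dist_eq hP w
  have h₁ := hT.connected.dist_triangle (u := v) (v := P.getVert k) (w := w)
  have h₂ := hT.connected.dist_triangle (u := P.getVert k) (v := P.getVert l) (w := w)
  have hkl : T.dist (P.getVert k) (P.getVert l) = max k l - min k l := by
    rcases le_total k l with h | h
    · rw [hT.dist_getVert_getVert hP h hl]; omega
    · rw [dist_comm, hT.dist_getVert_getVert hP h hk]; omega
  have hwl : T.dist (P.getVert l) w = T.dist w (P.getVert l) := dist_comm
  -- maximality of `P` gives `T.dist w (P.getVert l) ≤ min l (P.length - l)`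
  have := hdiam w a
  have := hdiam w b
  omega

lemma exists_eccVert_eq (v : V) :
    ∃ k ≤ P.length, eccVert T v = T.dist v (P.getVert k) + max k (P.length - k) := by
  obtain ⟨k, hk, hva, hvb⟩ := hT.exists_getVert_dist_eq hP v
  refine ⟨k, hk, ?_⟩
  rw [hT.eccVert_eq_max_dist hP hdiam, hva, hvb]
  omega

lemma eccVert_getVert {k : ℕ} (hk : k ≤ P.length) :
    eccVert T (P.getVert k) = max k (P.length - k) := by
  rw [hT.eccVert_eq_max_dist hP hdiam, dist_comm, hT.dist_start_getVert hP hk,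
    hT.dist_getVert_end hP hk]

lemma graphRad_eq [Nonempty V] : graphRad T = (P.length + 1) / 2 := by
  refine le_antisymm ?_ (le_inf' _ _ fun v _ => ?_)
  · refine (inf'_le _ (mem_univ (P.getVert (P.length / 2)))).trans_eq ?_
    rw [hT.eccVert_getVert hP hdiam (Nat.div_le_self _ _)]
    omega
  · obtain ⟨k, -, hv⟩ := hT.exists_eccVert_eq hP hdiam v
    omega

lemma center_eq [Nonempty V] : {v | eccVert T v = graphRad T} =
    {P.getVert (P.length / 2), P.getVert ((P.length + 1) / 2)} := by
  ext v
  rw [Set.mem_ofPred_eq, hT.graphRad_eq hP hdiam, Set.mem_insert_iff, Set.mem_singleton_iff]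
  constructor
  · intro hv
    obtain ⟨k, hk, hvk⟩ := hT.exists_eccVert_eq hP hdiam v
    have hk' : k = P.length / 2 ∨ k = (P.length + 1) / 2 := by omega
    have hvP : v = P.getVert k := hT.connected.dist_eq_zero_iff.1 (by omega)
    rcases hk' with rfl | rfl <;> simp [hvP]
  · rintro (rfl | rfl) <;> rw [hT.eccVert_getVert hP hdiam (by omega)] <;> omega

lemma ncard_center_of_even [Nonempty V] (h : Even P.length) :
    {v | eccVert T v = graphRad T}.ncard = 1 := by
  obtain ⟨s, hs⟩ := h
  rw [hT.center_eq hP hdiam, show (P.length + 1) / 2 = P.length / 2 by omega,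
    Set.pair_eq_singleton, Set.ncard_singleton]

lemma ncard_center_of_odd [Nonempty V] (h : Odd P.length) :
    {v | eccVert T v = graphRad T}.ncard = 2 := by
  obtain ⟨s, hs⟩ := h
  rw [hT.center_eq hP hdiam]
  refine Set.ncard_pair fun heq => ?_
  have := hP.getVert_injOn (by simp; omega) (by simp; omega) heq
  omega

lemma graphRad_add_one_le_eccVert [Nonempty V] {v : V} (hv : v ∉ P.support) :
    graphRad T + 1 ≤ eccVert T v := by
  obtain ⟨k, hk, hvk⟩ := hT.exists_eccVert_eq hP hdiam v
  have hne : T.dist v (P.getVert k) ≠ 0 := fun h =>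
    hv (hT.connected.dist_eq_zero_iff.1 h ▸ P.getVert_mem_support k)
  rw [hT.graphRad_eq hP hdiam]
  omega

lemma eccSum_eq_sum_max_add [DecidableEq V] :
    eccSum T = ∑ k ∈ range (P.length + 1), max k (P.length - k) +
      ∑ v ∈ ((range (P.length + 1)).image P.getVert)ᶜ, eccVert T v := by
  rw [eccSum, ← sum_add_sum_compl ((range (P.length + 1)).image P.getVert),
    sum_image hP.getVert_injOn_range]
  congr 1
  exact sum_congr rfl fun k hk => hT.eccVert_getVert hP hdiam (Nat.lt_succ_iff.1 (mem_range.1 hk))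

lemma sum_max_add_mul_le_eccSum [Nonempty V] :
    ∑ k ∈ range (P.length + 1), max k (P.length - k) +
      (Fintype.card V - (P.length + 1)) * (graphRad T + 1) ≤ eccSum T := by
  classical
  have hcompl : #((range (P.length + 1)).image P.getVert)ᶜ =
      Fintype.card V - (P.length + 1) := by
    rw [card_compl, hP.card_image_getVert]
  rw [hT.eccSum_eq_sum_max_add hP hdiam, ← hcompl, ← smul_eq_mul]
  gcongr
  refine card_nsmul_le_sum _ _ _ fun v hv =>
    hT.graphRad_add_one_le_eccVert hP hdiam fun hvP => ?_
  obtain ⟨k, rfl, hk⟩ := Walk.mem_support_iff_exists_getVert.1 hvP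
  exact mem_compl.1 hv (mem_image_of_mem _ (mem_range.2 (Nat.lt_succ_of_le hk)))

lemma eccSum_eq_of_card (h : Fintype.card V = P.length + 1) :
    eccSum T = ∑ k ∈ range (P.length + 1), max k (P.length - k) := by
  classical
  have huniv : (range (P.length + 1)).image P.getVert = univ :=
    eq_univ_of_card _ (by rw [hP.card_image_getVert, h])
  rw [hT.eccSum_eq_sum_max_add hP hdiam, huniv, compl_univ, sum_empty, add_zero]

lemma nonempty_iso_pathGraph_iff :
    Nonempty (T ≃g pathGraph (Fintype.card V)) ↔ Fintype.card V = P.length + 1 := by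
  have hlen : P.length < Fintype.card V := hP.length_lt
  constructor
  · rintro ⟨f⟩
    obtain ⟨w, hw⟩ := hT.connected.exists_walk_length_eq_dist
      (f.symm ⟨0, by omega⟩) (f.symm ⟨Fintype.card V - 1, by omega⟩)
    have hend := pathGraph_val_le_add_length (w.map f.toHom)
    have h₀ : f.toHom (f.symm ⟨0, by omega⟩) = ⟨0, by omega⟩ := f.apply_symm_apply _
    have h₁ : f.toHom (f.symm ⟨Fintype.card V - 1, by omega⟩) =
        ⟨Fintype.card V - 1, by omega⟩ := f.apply_symm_apply _
    rw [Walk.length_map, hw, h₀, h₁] at hend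
    have := hdiam (f.symm ⟨0, by omega⟩) (f.symm ⟨Fintype.card V - 1, by omega⟩)
    simp only at hend
    omega
  · intro hcard
    have hinj : Function.Injective fun k : Fin (Fintype.card V) => P.getVert k :=
      fun i j h => Fin.ext (hP.getVert_injOn (by simp; omega) (by simp; omega) h)
    refine ⟨Iso.symm ⟨Equiv.ofBijective _
      ((Fintype.bijective_iff_injective_and_card _).2 ⟨hinj, Fintype.card_fin _⟩), ?_⟩⟩
    intro i j
    simp only [Equiv.ofBijective_apply]
    rw [pathGraph_adj, ← dist_eq_one_iff_adj]
    have := i.isLt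
    have := j.isLt
    rcases le_total (i : ℕ) j with h | h
    · rw [hT.dist_getVert_getVert hP h (by omega)]; omega
    · rw [dist_comm, hT.dist_getVert_getVert hP h (by omega)]; omega

lemma le_eccSum_and_eq_iff_of_even [Nonempty V] (hev : Even P.length) :
    graphRad T * (Fintype.card V + graphRad T + 1) ≤ eccSum T ∧
      (eccSum T = graphRad T * (Fintype.card V + graphRad T + 1) ↔
        Fintype.card V = P.length + 1) := by
  obtain ⟨s, hs⟩ := hev
  obtain ⟨m, hm⟩ := Nat.exists_eq_add_of_lt hP.length_lt
  have hlow := hT.sum_max_add_mul_le_eccSum hP hdiam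
  have hpath := hT.eccSum_eq_of_card hP hdiam
  have hS := four_mul_sum_range_max_sub P.length
  have hr : graphRad T = s := by rw [hT.graphRad_eq hP hdiam]; omega
  generalize ∑ k ∈ range (P.length + 1), max k (P.length - k) = S at hlow hpath hS
  rw [hr, hm, show P.length + m + 1 - (P.length + 1) = m by omega] at hlow
  rw [hm, hs] at hpath
  rw [hs, show (s + s) % 2 = 0 by omega] at hS
  rw [hr, hm, hs]
  refine ⟨by linarith, fun heq => ?_, fun hn => ?_⟩
  · have : m = 0 := by linarith
    omega
  · obtain rfl : m = 0 := by omega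
    rw [hpath hn]
    linarith

lemma le_eccSum_and_eq_iff_of_odd [Nonempty V] (hodd : Odd P.length) :
    (2 * (graphRad T : ℚ) * (Fintype.card V + graphRad T) - Fintype.card V) / 2 ≤ eccSum T ∧
      ((eccSum T : ℚ) = (2 * (graphRad T : ℚ) * (Fintype.card V + graphRad T)
        - Fintype.card V) / 2 ↔ Fintype.card V = P.length + 1) := by
  obtain ⟨s, hs⟩ := hodd
  obtain ⟨m, hm⟩ := Nat.exists_eq_add_of_lt hP.length_lt
  have hlow := hT.sum_max_add_mul_le_eccSum hP hdiam
  have hpath := hT.eccSum_eq_of_card hP hdiam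
  have hS := four_mul_sum_range_max_sub P.length
  have hr : graphRad T = s + 1 := by rw [hT.graphRad_eq hP hdiam]; omega
  generalize ∑ k ∈ range (P.length + 1), max k (P.length - k) = S at hlow hpath hS
  rw [hr, hm, show P.length + m + 1 - (P.length + 1) = m by omega] at hlow
  rw [hm, hs] at hpath
  rw [hs, show (2 * s + 1) % 2 = 1 by omega] at hS
  rw [hr, hm, hs]
  have hlowQ : (_ : ℚ) ≤ _ := Nat.cast_le.2 hlow
  have hSQ : ((4 * _ : ℕ) : ℚ) = _ := congrArg (Nat.cast (R := ℚ)) hS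
  push_cast at hlowQ hSQ ⊢
  refine ⟨by linarith, fun heq => ?_, fun hn => ?_⟩
  · have : (m : ℚ) ≤ 0 := by linarith
    have : m = 0 := by exact_mod_cast le_antisymm this m.cast_nonneg
    omega
  · obtain rfl : m = 0 := by omega
    rw [hpath (by omega)]
    push_cast
    linarith

end IsTree

end SimpleGraph

theorem stmt_18 {V : Type*} [Fintype V] [Nonempty V] (T : SimpleGraph V)
    (hT : T.IsTree) :
    ({v : V | eccVert T v = graphRad T}.ncard = 1 →
      (graphRad T * (Fintype.card V + graphRad T + 1) ≤ eccSum T ∧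
        (eccSum T = graphRad T * (Fintype.card V + graphRad T + 1) ↔
          Nonempty (T ≃g SimpleGraph.pathGraph (Fintype.card V))))) ∧
    ({v : V | eccVert T v = graphRad T}.ncard = 2 →
      ((2 * (graphRad T : ℚ) * (Fintype.card V + graphRad T) - Fintype.card V) / 2
          ≤ eccSum T ∧
        ((eccSum T : ℚ) =
            (2 * (graphRad T : ℚ) * (Fintype.card V + graphRad T)
              - Fintype.card V) / 2 ↔
          Nonempty (T ≃g SimpleGraph.pathGraph (Fintype.card V))))) := by
  obtain ⟨a, b, P, hP, hdiam⟩ := hT.connected.exists_isPath_forall_dist_le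
  rw [hT.nonempty_iso_pathGraph_iff hP hdiam]
  rcases Nat.even_or_odd P.length with hev | hodd
  · exact ⟨fun _ => hT.le_eccSum_and_eq_iff_of_even hP hdiam hev,
      fun h => absurd (hT.ncard_center_of_even hP hdiam hev ▸ h) (by norm_num)⟩
  · exact ⟨fun h => absurd (hT.ncard_center_of_odd hP hdiam hodd ▸ h) (by norm_num),
      fun _ => hT.le_eccSum_and_eq_iff_of_odd hP hdiam hodd⟩
end
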